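/- arXiv:1711.07429 — 2 statements merged into one kernel-verified Lean document; each statement's English description precedes it below -/
import Mathlib

section
/- Let w be a nonzero complex number and let L₁, L₂ be complex numbers with exp L₁ = w and exp L₂ = w, and let k be the (unique) integer such that L₂ = L₁ + 2πik. Then exp(L₂²/(4πi) − L₂/2) = wᵏ · exp(L₁²/(4πi) − L₁/2). -/
/-!
Write `f(L) = L²/(4πi) − L/2`. Expanding the square,
`f(L + 2πik) = f(L) + k·L + (k(k−1)/2)·2πi`, and `k(k−1)/2` is an integer because
`k(k−1)` is even. Exponentiating kills the last term and turns `k·L` into `(exp L)ᵏ = wᵏ`.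
-/

open Complex

noncomputable section

def branchExponent (L : ℂ) : ℂ :=
  L ^ 2 / (4 * (Real.pi : ℂ) * I) - L / 2

lemma branchExponent_add_two_pi_I_mul (L : ℂ) {k m : ℤ} (hm : k * (k - 1) = 2 * m) :
    branchExponent (L + 2 * Real.pi * I * k) =
      branchExponent L + k * L + m * (2 * Real.pi * I) := by
  have hπ : (Real.pi : ℂ) ≠ 0 := ofReal_ne_zero.mpr Real.pi_ne_zero
  have hm' : (k : ℂ) * (k - 1) = 2 * m := by exact_mod_cast hm
  unfold branchExponent
  field_simp
  linear_combination 8 * (Real.pi : ℂ) ^ 2 * I ^ 2 * hm'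

lemma exp_branchExponent_add_two_pi_I_mul (L : ℂ) (k : ℤ) :
    exp (branchExponent (L + 2 * Real.pi * I * k)) = exp L ^ k * exp (branchExponent L) := by
  obtain ⟨m, hm⟩ := Int.even_mul_pred_self k
  rw [branchExponent_add_two_pi_I_mul L (m := m) (by omega), exp_add, exp_add,
    exp_int_mul_two_pi_mul_I, exp_int_mul]
  ring

end

theorem branch_transformation_law_general (w L₁ L₂ : ℂ)
    (h1 : Complex.exp L₁ = w)
    (k : ℤ) (hk : L₂ = L₁ + 2 * (Real.pi : ℂ) * Complex.I * (k : ℂ)) :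
    Complex.exp (L₂ ^ 2 / (4 * (Real.pi : ℂ) * Complex.I) - L₂ / 2) =
      w ^ k * Complex.exp (L₁ ^ 2 / (4 * (Real.pi : ℂ) * Complex.I) - L₁ / 2) := by
  subst hk h1
  exact exp_branchExponent_add_two_pi_I_mul L₁ k

/-- Branch-transformation law of the multivalued function
`φ(w) = exp((log w)²/(4πi) − (log w)/2)`: if `L₁, L₂` are two logarithms of the
nonzero complex number `w`, differing by `2πik`, then
`exp(L₂²/(4πi) − L₂/2) = wᵏ · exp(L₁²/(4πi) − L₁/2)`. -/
theorem branch_transformation_law (w L₁ L₂ : ℂ) (hw : w ≠ 0)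
    (h1 : Complex.exp L₁ = w) (h2 : Complex.exp L₂ = w)
    (k : ℤ) (hk : L₂ = L₁ + 2 * (Real.pi : ℂ) * Complex.I * (k : ℂ)) :
    Complex.exp (L₂ ^ 2 / (4 * (Real.pi : ℂ) * Complex.I) - L₂ / 2) =
      w ^ k * Complex.exp (L₁ ^ 2 / (4 * (Real.pi : ℂ) * Complex.I) - L₁ / 2) :=
  branch_transformation_law_general w L₁ L₂ h1 k hk
end

section
/- Let ρ₁, ρ₂, ρ₀, c, ε be real numbers with 1 < ρ₂ < ρ₁⁻¹, ρ₁ρ₂⁻¹ < ρ₀ < ρ₁, ρ₀ < c < ρ₁, and 0 < ε < (ρ₀ − ρ₁ρ₂⁻¹)/2. Set a = ρ₂ − ε, b = c⁻¹ + ε, and A = {z ∈ ℂ : a ≤ |z| ≤ b}. Then for every complex number λ with c ≤ |λ| ≤ ρ₁ and every nonzero integer k, the sets λᵏ·A = {λᵏ·z : z ∈ A} and A are disjoint. -/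
/-! Since `|λ| ≤ ρ₁ < 1`, a nonzero power `λᵏ` either shrinks the annulus `Δ[a,b]` into
`|z| ≤ ρ₁ b` or expands it into `|z| ≥ ρ₁⁻¹ a`. Both miss `Δ[a,b]` as soon as `ρ₁ b < a`, and the
constraints on `ρ₀, c, ε` are exactly what makes this inequality hold. -/

section Annulus

variable {E : Type*} [SeminormedRing E] [NormMulClass E]

theorem disjoint_image_mul_annulus {μ : E} {a b : ℝ} (h : ‖μ‖ * b < a ∨ b < ‖μ‖ * a) :
    Disjoint ((fun z => μ * z) '' {z : E | a ≤ ‖z‖ ∧ ‖z‖ ≤ b}) {z : E | a ≤ ‖z‖ ∧ ‖z‖ ≤ b} := by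
  rw [Set.disjoint_left]
  rintro _ ⟨z, ⟨haz, hzb⟩, rfl⟩ ⟨haμz, hμzb⟩
  rw [norm_mul] at haμz hμzb
  have := norm_nonneg μ
  rcases h with h | h <;> nlinarith

end Annulus

theorem zpow_le_or_inv_le_zpow {r ρ : ℝ} (hr : 0 < r) (hrρ : r ≤ ρ) (hρ : ρ ≤ 1) {k : ℤ}
    (hk : k ≠ 0) : r ^ k ≤ ρ ∨ ρ⁻¹ ≤ r ^ k := by
  have hr1 : r ≤ 1 := hrρ.trans hρ
  rcases hk.lt_or_gt with hk | hk
  · right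
    calc ρ⁻¹ ≤ r⁻¹ := inv_anti₀ hr hrρ
      _ = r ^ (-1 : ℤ) := (zpow_neg_one r).symm
      _ ≤ r ^ k := zpow_le_zpow_right_of_le_one₀ hr hr1 (by omega)
  · left
    calc r ^ k ≤ r ^ (1 : ℤ) := zpow_le_zpow_right_of_le_one₀ hr hr1 (by omega)
      _ = r := zpow_one r
      _ ≤ ρ := hrρ

theorem disjoint_image_zpow_mul_annulus {𝕜 : Type*} [NormedDivisionRing 𝕜] {lam : 𝕜}
    {ρ a b : ℝ} (hlam : 0 < ‖lam‖) (hlamρ : ‖lam‖ ≤ ρ) (hρ : ρ ≤ 1) (hb : 0 ≤ b)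
    (hρab : ρ * b < a) {k : ℤ} (hk : k ≠ 0) :
    Disjoint ((fun z => lam ^ k * z) '' {z : 𝕜 | a ≤ ‖z‖ ∧ ‖z‖ ≤ b})
      {z : 𝕜 | a ≤ ‖z‖ ∧ ‖z‖ ≤ b} := by
  have hρ0 : 0 < ρ := hlam.trans_le hlamρ
  apply disjoint_image_mul_annulus
  rw [norm_zpow]
  rcases zpow_le_or_inv_le_zpow hlam hlamρ hρ hk with hle | hge
  · left
    nlinarith
  · right
    have hba : b < ρ⁻¹ * a := by rwa [← div_eq_inv_mul, lt_div_iff₀' hρ0]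
    have ha : 0 ≤ a := by nlinarith
    nlinarith

theorem add_div_self_lt_add_div_self {p x y : ℝ} (hx : 0 < x) (hxy : x < y) (hp : p < x * y) :
    x + p / x < y + p / y := by
  have hy : 0 < y := hx.trans hxy
  have key : y + p / y - (x + p / x) = (y - x) * (x * y - p) / (x * y) := by
    field_simp
    ring
  have : 0 < (y - x) * (x * y - p) / (x * y) := by
    apply div_pos <;> nlinarith
  linarith

theorem mul_outer_radius_lt_inner_radius {ρ₁ ρ₂ ρ₀ c ε : ℝ} (h1 : 1 < ρ₂) (h2 : ρ₂ < ρ₁⁻¹)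
    (h3 : ρ₁ * ρ₂⁻¹ < ρ₀) (h4 : ρ₀ < ρ₁) (h5 : ρ₀ < c) (h7 : 0 < ε)
    (h8 : ε < (ρ₀ - ρ₁ * ρ₂⁻¹) / 2) :
    ρ₁ * (c⁻¹ + ε) < ρ₂ - ε := by
  obtain ⟨hρ₁0, hρ₁1⟩ := one_lt_inv_iff₀.mp (h1.trans h2)
  have hρ₂0 : 0 < ρ₂ := zero_lt_one.trans h1
  have hρ₀0 : 0 < ρ₀ := (by positivity : 0 < ρ₁ * ρ₂⁻¹).trans h3
  have hc : ρ₁ / c < ρ₁ / ρ₀ := div_lt_div_of_pos_left hρ₁0 hρ₀0 h5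
  have hmono : ρ₀ + ρ₁ / ρ₀ < ρ₂ + ρ₁ / ρ₂ :=
    add_div_self_lt_add_div_self hρ₀0 (by linarith)
      (by rwa [← div_eq_mul_inv, div_lt_iff₀ hρ₂0] at h3)
  have hε : ρ₁ * ε < ε := mul_lt_of_lt_one_left h7 hρ₁1
  simp only [div_eq_mul_inv] at hc hmono
  linarith [mul_add ρ₁ c⁻¹ ε]

theorem annulus_translates_disjoint_general (ρ₁ ρ₂ ρ₀ c ε : ℝ)
    (h1 : 1 < ρ₂) (h2 : ρ₂ < ρ₁⁻¹) (h3 : ρ₁ * ρ₂⁻¹ < ρ₀) (h4 : ρ₀ < ρ₁)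
    (h5 : ρ₀ < c) (h7 : 0 < ε) (h8 : ε < (ρ₀ - ρ₁ * ρ₂⁻¹) / 2)
    (a b : ℝ) (ha : a = ρ₂ - ε) (hb : b = c⁻¹ + ε)
    (A : Set ℂ) (hA : A = {z : ℂ | a ≤ ‖z‖ ∧ ‖z‖ ≤ b}) :
    ∀ lam : ℂ, c ≤ ‖lam‖ → ‖lam‖ ≤ ρ₁ →
      ∀ k : ℤ, k ≠ 0 → Disjoint ((fun z => lam ^ k * z) '' A) A := by
  intro lam hclam hlamρ₁ k hk
  subst hA ha hb
  obtain ⟨hρ₁0, hρ₁1⟩ := one_lt_inv_iff₀.mp (h1.trans h2)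
  have hc : 0 < c := (by positivity : 0 < ρ₁ * ρ₂⁻¹).trans (h3.trans h5)
  exact disjoint_image_zpow_mul_annulus (hc.trans_le hclam) hlamρ₁ hρ₁1.le
    (add_pos (inv_pos.mpr hc) h7).le
    (mul_outer_radius_lt_inner_radius h1 h2 h3 h4 h5 h7 h8) hk

/-- For `A = Δ[a,b]` with `a = ρ₂ − ε`, `b = c⁻¹ + ε`, the translates `λᵏ·A`
are disjoint from `A` for every `λ` with `c ≤ |λ| ≤ ρ₁` and every nonzero integer `k`. -/
theorem annulus_translates_disjoint (ρ₁ ρ₂ ρ₀ c ε : ℝ)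
    (h1 : 1 < ρ₂) (h2 : ρ₂ < ρ₁⁻¹) (h3 : ρ₁ * ρ₂⁻¹ < ρ₀) (h4 : ρ₀ < ρ₁)
    (h5 : ρ₀ < c) (h6 : c < ρ₁) (h7 : 0 < ε) (h8 : ε < (ρ₀ - ρ₁ * ρ₂⁻¹) / 2)
    (a b : ℝ) (ha : a = ρ₂ - ε) (hb : b = c⁻¹ + ε)
    (A : Set ℂ) (hA : A = {z : ℂ | a ≤ ‖z‖ ∧ ‖z‖ ≤ b}) :
    ∀ lam : ℂ, c ≤ ‖lam‖ → ‖lam‖ ≤ ρ₁ →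
      ∀ k : ℤ, k ≠ 0 → Disjoint ((fun z => lam ^ k * z) '' A) A :=
  annulus_translates_disjoint_general ρ₁ ρ₂ ρ₀ c ε h1 h2 h3 h4 h5 h7 h8 a b ha hb A hA
end
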